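/- Let L be a Lie conformal superalgebra that is finitely generated as an H-module, let P be a Poisson conformal superalgebra, and let τ : L → P be an injective parity-preserving H-module homomorphism with τ([a_λ b]) = [τ(a)_λ τ(b)] for all a, b ∈ L. Suppose that for every nonzero a ∈ L there exists b ∈ L with (τ(a)_λ τ(b)) ≠ 0. Then L has a finite faithful conformal representation. -/

import Mathlib

open Finsupp

noncomputable section

variable (k : Type) [Field k] [CharZero k]

section Base

variable {M N : Type} [AddCommGroup M] [Module k M] [AddCommGroup N] [Module k N]

/-- Multiplication by `λ` on `M[λ] := ℕ →₀ M`. -/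
def lamMul : (ℕ →₀ M) →ₗ[k] (ℕ →₀ M) := Finsupp.lmapDomain M k Nat.succ

/-- Apply a linear map to every coefficient of a polynomial. -/
def cw (f : M →ₗ[k] N) : (ℕ →₀ M) →ₗ[k] (ℕ →₀ N) := Finsupp.mapRange.linearMap f

/-- The constant-polynomial embedding `M → M[λ]`. -/
def cst : M →ₗ[k] (ℕ →₀ M) := Finsupp.lsingle 0

/-- Multiplication by `λ` on `M[λ,μ] := ℕ →₀ (ℕ →₀ M)` (outer variable `μ`, inner `λ`). -/
def lamMul2 : (ℕ →₀ (ℕ →₀ M)) →ₗ[k] (ℕ →₀ (ℕ →₀ M)) := cw k (lamMul k)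

/-- Multiplication by `μ` on `M[λ,μ]`. -/
def muMul2 : (ℕ →₀ (ℕ →₀ M)) →ₗ[k] (ℕ →₀ (ℕ →₀ M)) := Finsupp.lmapDomain (ℕ →₀ M) k Nat.succ

/-- The constant embedding `M → M[λ,μ]`. -/
def cst2 : M →ₗ[k] (ℕ →₀ (ℕ →₀ M)) := (cst k).comp (cst k)

/-- Interchange of the two variables of `M[λ,μ]`. -/
def swapVar : (ℕ →₀ (ℕ →₀ M)) →ₗ[k] (ℕ →₀ (ℕ →₀ M)) :=
  Finsupp.lsum k fun n => cw k (Finsupp.lsingle n)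

/-- The substitution `λ ↦ -∂-λ` on `M[λ]`, where `∂` acts on `M` via `D`. -/
def substNeg (D : M →ₗ[k] M) : (ℕ →₀ M) →ₗ[k] (ℕ →₀ M) :=
  Finsupp.lsum k fun n => ((-(cw k D) - lamMul k) ^ n) ∘ₗ cst k

/-- The substitution `ν ↦ λ+μ` from `M[ν]` to `M[λ,μ]`. -/
def substAdd : (ℕ →₀ M) →ₗ[k] (ℕ →₀ (ℕ →₀ M)) :=
  Finsupp.lsum k fun n => ((lamMul2 k + muMul2 k) ^ n) ∘ₗ cst2 k

end Base
section Ops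

variable {A B C V W L P : Type} [AddCommGroup A] [Module k A] [AddCommGroup B] [Module k B]
  [AddCommGroup C] [Module k C] [AddCommGroup V] [Module k V] [AddCommGroup W] [Module k W]
  [AddCommGroup L] [Module k L] [AddCommGroup P] [Module k P]

/-- `P_λ(a, Q_μ(b, c))`, an element of `W[λ,μ]` (outer variable `μ`, inner `λ`). -/
def opComp (F : A →ₗ[k] C →ₗ[k] (ℕ →₀ W)) (G : B →ₗ[k] V →ₗ[k] (ℕ →₀ C))
    (a : A) (b : B) (c : V) : ℕ →₀ (ℕ →₀ W) := cw k (F a) (G b c)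

/-- `Q_μ(b, P_λ(a, c))`, an element of `W[λ,μ]` (outer variable `μ`, inner `λ`). -/
def opCompSwap (F : B →ₗ[k] C →ₗ[k] (ℕ →₀ W)) (G : A →ₗ[k] V →ₗ[k] (ℕ →₀ C))
    (b : B) (a : A) (c : V) : ℕ →₀ (ℕ →₀ W) := swapVar k (cw k (F b) (G a c))

/-- `Q_{λ+μ}(P_λ(a, b), c)`, an element of `W[λ,μ]` (outer variable `μ`, inner `λ`). -/
def opSubst (F : A →ₗ[k] B →ₗ[k] (ℕ →₀ C)) (G : C →ₗ[k] V →ₗ[k] (ℕ →₀ W))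
    (a : A) (b : B) (c : V) : ℕ →₀ (ℕ →₀ W) :=
  Finsupp.lsum k (fun n => ((lamMul2 k (M := W)) ^ n) ∘ₗ substAdd k) (cw k (G.flip c) (F a b))

end Ops

/-- The Koszul sign `(-1)^{|a||b|}` attached to parities `i`, `j`. -/
def sgn (i j : ZMod 2) : ℤ := if i = 1 ∧ j = 1 then -1 else 1

section Structures

variable {A B C L V P : Type} [AddCommGroup A] [Module k A] [AddCommGroup B] [Module k B]
  [AddCommGroup C] [Module k C]
  [AddCommGroup L] [Module k L] [AddCommGroup V] [Module k V] [AddCommGroup P] [Module k P]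

/-- A `ℤ₂`-graded module over `H = k[∂]`, where `∂` acts via `D`:
the two graded components are complementary and `∂`-invariant. -/
structure IsGradedHMod (D : L →ₗ[k] L) (par : ZMod 2 → Submodule k L) : Prop where
  sup_eq_top : par 0 ⊔ par 1 = ⊤
  inf_eq_bot : par 0 ⊓ par 1 = ⊥
  map_d : ∀ i a, a ∈ par i → D a ∈ par i

/-- Sesqui-linearity of a pairing `A ⊗ B → C[λ]` with respect to the `∂`-actions
`DA`, `DB`, `DC`: `F(∂a, b) = -λ F(a,b)` and `F(a, ∂b) = (∂+λ) F(a,b)`. -/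
structure IsSesqui (DA : A →ₗ[k] A) (DB : B →ₗ[k] B) (DC : C →ₗ[k] C)
    (F : A →ₗ[k] B →ₗ[k] (ℕ →₀ C)) : Prop where
  dleft : ∀ a b, F (DA a) b = -(lamMul k (F a b))
  dright : ∀ a b, F a (DB b) = cw k DC (F a b) + lamMul k (F a b)

/-- A Lie conformal superalgebra structure on the `H`-module `L` (with `∂` acting via `D`)
with `ℤ₂`-grading `par` and `λ`-bracket `Br`. -/
structure IsLieConfSuper (D : L →ₗ[k] L) (par : ZMod 2 → Submodule k L)
    (Br : L →ₗ[k] L →ₗ[k] (ℕ →₀ L)) : Prop where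
  graded : IsGradedHMod k D par
  sesqui : IsSesqui k D D D Br
  parity : ∀ i j a b, a ∈ par i → b ∈ par j → ∀ n, Br a b n ∈ par (i + j)
  skew : ∀ i j a b, a ∈ par i → b ∈ par j → Br a b = -(sgn i j • substNeg k D (Br b a))
  jacobi : ∀ i j a b c, a ∈ par i → b ∈ par j →
    opComp k Br Br a b c = opSubst k Br Br a b c + sgn i j • opCompSwap k Br Br b a c

/-- A Poisson conformal superalgebra structure on the `H`-module `P`, with `λ`-bracket `Br`
and conformally associative, supercommutative product `Ml`, linked by the conformal
Leibniz rule. -/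
structure IsPoissonConfSuper (D : P →ₗ[k] P) (par : ZMod 2 → Submodule k P)
    (Br Ml : P →ₗ[k] P →ₗ[k] (ℕ →₀ P)) : Prop where
  lie : IsLieConfSuper k D par Br
  mul_sesqui : IsSesqui k D D D Ml
  mul_parity : ∀ i j a b, a ∈ par i → b ∈ par j → ∀ n, Ml a b n ∈ par (i + j)
  assoc : ∀ a b c, opComp k Ml Ml a b c = opSubst k Ml Ml a b c
  comm : ∀ i j a b, a ∈ par i → b ∈ par j → Ml a b = sgn i j • substNeg k D (Ml b a)
  leibniz : ∀ i j a b c, a ∈ par i → b ∈ par j →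
    opComp k Br Ml a b c = opSubst k Br Ml a b c + sgn i j • opCompSwap k Ml Br b a c

/-- A conformal representation of the Lie conformal superalgebra `(L, D, par, Br)` on the
`ℤ₂`-graded `H`-module `(V, DV, parV)`. -/
structure IsConfRep (D : L →ₗ[k] L) (par : ZMod 2 → Submodule k L)
    (Br : L →ₗ[k] L →ₗ[k] (ℕ →₀ L)) (DV : V →ₗ[k] V) (parV : ZMod 2 → Submodule k V)
    (ρ : L →ₗ[k] V →ₗ[k] (ℕ →₀ V)) : Prop where
  sesqui : IsSesqui k D DV DV ρ
  parity : ∀ i j a x, a ∈ par i → x ∈ parV j → ∀ n, ρ a x n ∈ parV (i + j)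
  jacobi : ∀ i j a b x, a ∈ par i → b ∈ par j →
    opComp k ρ ρ a b x - sgn i j • opCompSwap k ρ ρ b a x = opSubst k Br ρ a b x

/-- Finiteness of an `H`-module: it is generated, as a `k[∂]`-module, by finitely
many elements. -/
def IsHFinite (DV : V →ₗ[k] V) : Prop :=
  ∃ s : Finset V, ∀ W : Submodule k V, (∀ x ∈ W, DV x ∈ W) → (↑s : Set V) ⊆ ↑W → W = ⊤

/-- The Lie conformal superalgebra `(L, D, par, Br)` admits a finite faithful conformal
representation. -/
def HasFFR (D : L →ₗ[k] L) (par : ZMod 2 → Submodule k L)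
    (Br : L →ₗ[k] L →ₗ[k] (ℕ →₀ L)) : Prop :=
  ∃ (V : Type) (_ : AddCommGroup V) (_ : Module k V) (DV : V →ₗ[k] V)
    (parV : ZMod 2 → Submodule k V) (ρ : L →ₗ[k] V →ₗ[k] (ℕ →₀ V)),
    IsGradedHMod k DV parV ∧ IsConfRep k D par Br DV parV ρ ∧ IsHFinite k DV ∧
      ∀ a : L, a ≠ 0 → ρ a ≠ 0

/-- `ρ` (defined on the ambient space `P`) restricts to a conformal representation of the
Lie conformal subalgebra `L ≤ P` (with ambient `λ`-bracket `Br`) on `(V, DV, parV)`. -/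
def IsConfRepOn (D : P →ₗ[k] P) (par : ZMod 2 → Submodule k P)
    (Br : P →ₗ[k] P →ₗ[k] (ℕ →₀ P)) (L : Submodule k P)
    (DV : V →ₗ[k] V) (parV : ZMod 2 → Submodule k V)
    (ρ : P →ₗ[k] V →ₗ[k] (ℕ →₀ V)) : Prop :=
  (∀ a ∈ L, ∀ x, ρ (D a) x = -(lamMul k (ρ a x))) ∧
  (∀ a ∈ L, ∀ x, ρ a (DV x) = cw k DV (ρ a x) + lamMul k (ρ a x)) ∧
  (∀ i j, ∀ a ∈ L ⊓ par i, ∀ x ∈ parV j, ∀ n, ρ a x n ∈ parV (i + j)) ∧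
  (∀ i j, ∀ a ∈ L ⊓ par i, ∀ b ∈ L ⊓ par j, ∀ x,
    opComp k ρ ρ a b x - sgn i j • opCompSwap k ρ ρ b a x = opSubst k Br ρ a b x)

end Structures
section Extension

variable {A B W V : Type} [AddCommGroup A] [Module k A] [AddCommGroup B] [Module k B]
  [AddCommGroup W] [Module k W] [AddCommGroup V] [Module k V]

/-- The sesqui-linear extension of a pairing `F : A ⊗ B → W[λ]` to a pairing
`(H ⊗ A) ⊗ (H ⊗ B) → W[λ]` (where `H ⊗ A` is realized as `ℕ →₀ A`, the index recording
the power of `∂`): `F(∂^n a, ∂^m b) = (-λ)^n (∂+λ)^m F(a, b)`, where `∂` acts on `W[λ]`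
coefficientwise via `DW`. -/
def extSesqui (DW : W →ₗ[k] W) (F : A →ₗ[k] B →ₗ[k] (ℕ →₀ W)) :
    (ℕ →₀ A) →ₗ[k] (ℕ →₀ B) →ₗ[k] (ℕ →₀ W) :=
  Finsupp.lsum k fun n =>
    (Finsupp.lsum (R := k) k).toLinearMap.comp <| LinearMap.pi fun m =>
      (LinearMap.llcomp k B (ℕ →₀ W) (ℕ →₀ W)
        (((-(lamMul k (M := W))) ^ n) * ((cw k DW + lamMul k) ^ m))).comp F

/-- The action of `∂` on `H ⊗ V`, realized as `ℕ →₀ V`. -/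
def DD (V : Type) [AddCommGroup V] [Module k V] : (ℕ →₀ V) →ₗ[k] (ℕ →₀ V) :=
  Finsupp.lmapDomain V k Nat.succ

/-- The canonical embedding `V → H ⊗ V`. -/
def emb (V : Type) [AddCommGroup V] [Module k V] : V →ₗ[k] (ℕ →₀ V) :=
  Finsupp.lsingle 0

/-- A grading of `V` lifts coefficientwise to a grading of `H ⊗ V = ℕ →₀ V`. -/
def liftPar {V : Type} [AddCommGroup V] [Module k V] (par : ZMod 2 → Submodule k V)
    (i : ZMod 2) : Submodule k (ℕ →₀ V) where
  carrier := { f | ∀ n, f n ∈ par i }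
  add_mem' := fun hf hg n => by
    simpa only [Finsupp.add_apply] using add_mem (hf n) (hg n)
  zero_mem' := fun n => by simp
  smul_mem' := fun c f hf n => by
    simpa only [Finsupp.smul_apply] using Submodule.smul_mem _ c (hf n)

end Extension

section Super

variable (p : Type) [NonUnitalRing p] [Module k p] [SMulCommClass k p p] [IsScalarTower k p p]

/-- An (ordinary) Poisson superalgebra structure on the `ℤ₂`-graded associative
supercommutative algebra `p`, with super Lie bracket `br`. -/
structure IsPoissonSuper (par : ZMod 2 → Submodule k p) (br : p →ₗ[k] p →ₗ[k] p) : Prop where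
  sup_eq_top : par 0 ⊔ par 1 = ⊤
  inf_eq_bot : par 0 ⊓ par 1 = ⊥
  mul_mem : ∀ i j (a b : p), a ∈ par i → b ∈ par j → a * b ∈ par (i + j)
  mul_scomm : ∀ i j (a b : p), a ∈ par i → b ∈ par j → a * b = sgn i j • (b * a)
  br_mem : ∀ i j a b, a ∈ par i → b ∈ par j → br a b ∈ par (i + j)
  br_skew : ∀ i j a b, a ∈ par i → b ∈ par j → br a b = -(sgn i j • br b a)
  br_jacobi : ∀ i j a b c, a ∈ par i → b ∈ par j →
    br a (br b c) = br (br a b) c + sgn i j • br b (br a c)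
  leibniz : ∀ i j a b c, a ∈ par i → b ∈ par j →
    br a (b * c) = br a b * c + sgn i j • (b * br a c)

/-- An even derivation of the Poisson superalgebra `(p, par, br)`. -/
structure IsEvenDerivation (par : ZMod 2 → Submodule k p) (br : p →ₗ[k] p →ₗ[k] p)
    (d : p →ₗ[k] p) : Prop where
  even : ∀ i a, a ∈ par i → d a ∈ par i
  map_mul : ∀ a b, d (a * b) = d a * b + a * d b
  map_br : ∀ a b, d (br a b) = br (d a) b + br a (d b)

/-- Base pairing `a ⊗ b ↦ a b` (constant in `λ`) for the current/quadratic constructions. -/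
def curMul0 : p →ₗ[k] p →ₗ[k] (ℕ →₀ (ℕ →₀ p)) :=
  (LinearMap.mul k p).compr₂ ((cst k).comp (emb k p))

/-- Base pairing `a ⊗ b ↦ {a, b}` (constant in `λ`) for the current construction. -/
def curBr0 (br : p →ₗ[k] p →ₗ[k] p) : p →ₗ[k] p →ₗ[k] (ℕ →₀ (ℕ →₀ p)) :=
  br.compr₂ ((cst k).comp (emb k p))

/-- Base pairing `a ⊗ b ↦ {a, b} + ∂ (d a · b) + λ d(a b)` of the Poisson conformal
superalgebra `L(p, d)`. -/
def qua0 (br : p →ₗ[k] p →ₗ[k] p) (d : p →ₗ[k] p) : p →ₗ[k] p →ₗ[k] (ℕ →₀ (ℕ →₀ p)) :=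
  br.compr₂ ((cst k).comp (emb k p))
    + ((LinearMap.mul k p).comp d).compr₂ ((cst k).comp ((DD k p).comp (emb k p)))
    + ((LinearMap.mul k p).compr₂ d).compr₂ ((lamMul k).comp ((cst k).comp (emb k p)))

/-- The multiplication `(a ∂^n)_λ (b ∂^m) = (-λ)^n (∂+λ)^m (a b)` on `H ⊗ p`. -/
def LpdMul : (ℕ →₀ p) →ₗ[k] (ℕ →₀ p) →ₗ[k] (ℕ →₀ (ℕ →₀ p)) :=
  extSesqui k (DD k p) (curMul0 k p)

/-- The `λ`-bracket of the current Poisson conformal superalgebra `Cur p`. -/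
def CurBr (br : p →ₗ[k] p →ₗ[k] p) : (ℕ →₀ p) →ₗ[k] (ℕ →₀ p) →ₗ[k] (ℕ →₀ (ℕ →₀ p)) :=
  extSesqui k (DD k p) (curBr0 k p br)

/-- The `λ`-bracket of the Poisson conformal superalgebra `L(p, d)`. -/
def LpdBr (br : p →ₗ[k] p →ₗ[k] p) (d : p →ₗ[k] p) :
    (ℕ →₀ p) →ₗ[k] (ℕ →₀ p) →ₗ[k] (ℕ →₀ (ℕ →₀ p)) :=
  extSesqui k (DD k p) (qua0 k p br d)

/-- The twisted action `ρ̂_λ(a, u) = [a_λ u] + λ (a_λ u)` on `L(p, d)`. -/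
def LpdRho (br : p →ₗ[k] p →ₗ[k] p) (d : p →ₗ[k] p) :
    (ℕ →₀ p) →ₗ[k] (ℕ →₀ p) →ₗ[k] (ℕ →₀ (ℕ →₀ p)) :=
  LpdBr k p br d + (LpdMul k p).compr₂ (lamMul k)

end Super


/-!
On `P ⊕ P` put `ρ_λ(a)(x, u) = ([a_λ x], λ (a_λ x) + [a_λ u])`. The Jacobi identity for the
second component follows from the conformal Jacobi identity and the Leibniz rule in its two
forms (the second obtained through skew-symmetry), so `ρ` is a representation of the Lie
conformal superalgebra `P`, hence of `L` through `τ`. It preserves `W = τ(L) ⊕ U`, where `U` is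
the `H`-submodule generated by the coefficients of the products `(τa_λ τb)`: by the Leibniz
rule, `[τc_λ (τa_μ τb)]` only involves products with `τ[c_λ a]` and `τ[c_λ b]`. By
sesqui-linearity, `U` is generated by the products of generators of `L`, so `W` is finitely
generated; and `ρ` is faithful on `W` because the second component of `ρ_λ(a)(τb, 0)` is
`λ (τa_λ τb)`.
-/

section PolynomialCalculus

variable {k : Type} [Field k] {M N Q : Type} [AddCommGroup M] [Module k M]
  [AddCommGroup N] [Module k N] [AddCommGroup Q] [Module k Q]

lemma cw_apply (f : M →ₗ[k] N) (g : ℕ →₀ M) (n : ℕ) : cw k f g n = f (g n) := by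
  simp [cw]

lemma cw_single (f : M →ₗ[k] N) (n : ℕ) (a : M) : cw k f (single n a) = single n (f a) := by
  simp [cw]

lemma cw_comp (f : N →ₗ[k] Q) (g : M →ₗ[k] N) : cw k (f ∘ₗ g) = cw k f ∘ₗ cw k g :=
  Finsupp.mapRange.linearMap_comp f g

lemma cw_comp_apply (f : N →ₗ[k] Q) (g : M →ₗ[k] N) (x : ℕ →₀ M) :
    cw k (f ∘ₗ g) x = cw k f (cw k g x) := by
  rw [cw_comp]; rfl

lemma cw_add (f g : M →ₗ[k] N) (x : ℕ →₀ M) : cw k (f + g) x = cw k f x + cw k g x := by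
  ext n; simp [cw_apply]

lemma cw_injective {f : M →ₗ[k] N} (hf : Function.Injective f) :
    Function.Injective (cw k f) :=
  Finsupp.mapRange_injective _ (map_zero f) hf

lemma lamMul_apply_zero (g : ℕ →₀ M) : lamMul k g 0 = 0 := by
  simpa [lamMul] using Finsupp.mapDomain_of_notMem_range g 0 (by simp)

lemma lamMul_apply_succ (g : ℕ →₀ M) (n : ℕ) : lamMul k g (n + 1) = g n := by
  simpa [lamMul] using Finsupp.mapDomain_apply Nat.succ_injective g n

lemma lamMul_single (n : ℕ) (a : M) : lamMul k (single n a) = single (n + 1) a := by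
  simp [lamMul, Finsupp.mapDomain_single]

lemma lamMul_injective : Function.Injective (lamMul k (M := M)) :=
  Finsupp.mapDomain_injective Nat.succ_injective

lemma cw_lamMul (f : M →ₗ[k] N) : cw k f ∘ₗ lamMul k = lamMul k ∘ₗ cw k f := by
  apply Finsupp.lhom_ext
  intro n a
  simp [cw_single, lamMul_single]

lemma cw_lamMul_apply (f : M →ₗ[k] N) (g : ℕ →₀ M) :
    cw k f (lamMul k g) = lamMul k (cw k f g) :=
  LinearMap.congr_fun (cw_lamMul f) g

lemma swapVar_single_single (m n : ℕ) (a : M) :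
    swapVar k (single m (single n a)) = single n (single m a) := by
  simp [swapVar, cw_single]

lemma substAdd_single (n : ℕ) (a : M) :
    substAdd k (single n a) =
      (((lamMul2 k + muMul2 k) : (ℕ →₀ (ℕ →₀ M)) →ₗ[k] _) ^ n) (cst2 k a) := by
  simp [substAdd]

lemma substNeg_single (D : M →ₗ[k] M) (n : ℕ) (a : M) :
    substNeg k D (single n a) = (((-(cw k D) - lamMul k) : (ℕ →₀ M) →ₗ[k] _) ^ n) (single 0 a) := by
  simp [substNeg, cst]

lemma pow_apply_of_semiconj {T : M →ₗ[k] M} {T' : N →ₗ[k] N} {S : M →ₗ[k] N}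
    (h : S ∘ₗ T = T' ∘ₗ S) (n : ℕ) (x : M) : S ((T ^ n) x) = (T' ^ n) (S x) := by
  simp only [Module.End.pow_apply]
  exact Function.Semiconj.iterate_right (fun y => LinearMap.congr_fun h y) n x

lemma lhom_ext₂ {f g : (ℕ →₀ (ℕ →₀ M)) →ₗ[k] N}
    (h : ∀ m n a, f (single m (single n a)) = g (single m (single n a))) : f = g :=
  Finsupp.lhom_ext fun m x => by
    induction x using Finsupp.induction_linear with
    | zero => simp
    | add u v hu hv => rw [Finsupp.single_add, map_add, map_add, hu, hv]
    | single n a => exact h m n a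

lemma cw_cw_lamMul2 (f : M →ₗ[k] N) :
    cw k (cw k f) ∘ₗ lamMul2 k = lamMul2 k ∘ₗ cw k (cw k f) := by
  rw [lamMul2, lamMul2, ← cw_comp, cw_lamMul, cw_comp]

lemma cw_cw_lamMul2_add_muMul2 (f : M →ₗ[k] N) :
    cw k (cw k f) ∘ₗ (lamMul2 k + muMul2 k) = (lamMul2 k + muMul2 k) ∘ₗ cw k (cw k f) := by
  rw [LinearMap.comp_add, LinearMap.add_comp, cw_cw_lamMul2]
  exact congrArg _ (cw_lamMul (cw k f))

lemma cw_cw_swapVar (f : M →ₗ[k] N) :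
    cw k (cw k f) ∘ₗ swapVar k = swapVar k ∘ₗ cw k (cw k f) :=
  lhom_ext₂ fun m n a => by simp [swapVar_single_single, cw_single]

lemma cw_cw_swapVar_apply (f : M →ₗ[k] N) (x : ℕ →₀ (ℕ →₀ M)) :
    cw k (cw k f) (swapVar k x) = swapVar k (cw k (cw k f) x) :=
  LinearMap.congr_fun (cw_cw_swapVar f) x

lemma cw_cw_substAdd (f : M →ₗ[k] N) :
    cw k (cw k f) ∘ₗ substAdd k = substAdd k ∘ₗ cw k f := by
  apply Finsupp.lhom_ext
  intro n a
  simp only [LinearMap.comp_apply, cw_single, substAdd_single]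
  rw [pow_apply_of_semiconj (cw_cw_lamMul2_add_muMul2 f)]
  simp [cst2, cst, cw_single]

lemma swapVar_lamMul2 : swapVar k ∘ₗ lamMul2 k = muMul2 k (M := M) ∘ₗ swapVar k :=
  lhom_ext₂ fun m n a => by
    simp [lamMul2, muMul2, cw_single, lamMul_single, swapVar_single_single,
      Finsupp.mapDomain_single]

lemma swapVar_muMul2 : swapVar k ∘ₗ muMul2 k = lamMul2 k (M := M) ∘ₗ swapVar k :=
  lhom_ext₂ fun m n a => by
    simp [lamMul2, muMul2, cw_single, lamMul_single, swapVar_single_single,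
      Finsupp.mapDomain_single]

lemma swapVar_lamMul2_apply (x : ℕ →₀ (ℕ →₀ M)) :
    swapVar k (lamMul2 k x) = muMul2 k (swapVar k x) :=
  LinearMap.congr_fun swapVar_lamMul2 x

lemma swapVar_muMul2_apply (x : ℕ →₀ (ℕ →₀ M)) :
    swapVar k (muMul2 k x) = lamMul2 k (swapVar k x) :=
  LinearMap.congr_fun swapVar_muMul2 x

lemma swapVar_swapVar (x : ℕ →₀ (ℕ →₀ M)) : swapVar k (swapVar k x) = x :=
  LinearMap.congr_fun (lhom_ext₂ (f := swapVar k ∘ₗ swapVar k)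
    (g := (LinearMap.id : (ℕ →₀ (ℕ →₀ M)) →ₗ[k] _)) fun m n a => by simp [swapVar_single_single]) x

lemma swapVar_substAdd : swapVar k ∘ₗ substAdd k = substAdd k (M := M) := by
  apply Finsupp.lhom_ext
  intro n a
  have hswap : swapVar k ∘ₗ (lamMul2 k + muMul2 k) =
      (lamMul2 k + muMul2 k (M := M)) ∘ₗ swapVar k := by
    rw [LinearMap.comp_add, LinearMap.add_comp, swapVar_lamMul2, swapVar_muMul2, add_comm]
  simp only [LinearMap.comp_apply, substAdd_single]
  rw [pow_apply_of_semiconj hswap]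
  simp [cst2, cst, swapVar_single_single]

lemma lamMul2_comm_muMul2 : lamMul2 k ∘ₗ muMul2 k = muMul2 k (M := M) ∘ₗ lamMul2 k :=
  cw_lamMul (lamMul k)

lemma substAdd_lamMul :
    substAdd k ∘ₗ lamMul k = (lamMul2 k + muMul2 k (M := M)) ∘ₗ substAdd k := by
  apply Finsupp.lhom_ext
  intro n a
  simp only [LinearMap.comp_apply, lamMul_single, substAdd_single]
  rw [pow_succ']
  rfl

lemma substAdd_lamMul_apply (g : ℕ →₀ M) :
    substAdd k (lamMul k g) = lamMul2 k (substAdd k g) + muMul2 k (substAdd k g) :=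
  LinearMap.congr_fun substAdd_lamMul g

lemma lamMul2_add_muMul2_comp_lamMul2 :
    (lamMul2 k + muMul2 k) ∘ₗ lamMul2 k = lamMul2 k ∘ₗ (lamMul2 k + muMul2 k (M := M)) := by
  rw [LinearMap.add_comp, LinearMap.comp_add, lamMul2_comm_muMul2]

lemma polynomial_prod_ext {f g : ℕ →₀ (M × N)}
    (h₁ : cw k (LinearMap.fst k M N) f = cw k (LinearMap.fst k M N) g)
    (h₂ : cw k (LinearMap.snd k M N) f = cw k (LinearMap.snd k M N) g) : f = g := by
  ext n
  · simpa [cw_apply] using congrArg (· n) h₁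
  · simpa [cw_apply] using congrArg (· n) h₂

lemma polynomial₂_prod_ext {f g : ℕ →₀ (ℕ →₀ (M × N))}
    (h₁ : cw k (cw k (LinearMap.fst k M N)) f = cw k (cw k (LinearMap.fst k M N)) g)
    (h₂ : cw k (cw k (LinearMap.snd k M N)) f = cw k (cw k (LinearMap.snd k M N)) g) :
    f = g := by
  ext1 m
  refine polynomial_prod_ext (k := k) ?_ ?_
  · simpa [cw_apply] using congrArg (· m) h₁
  · simpa [cw_apply] using congrArg (· m) h₂

end PolynomialCalculus

section Substitution

variable {k : Type} [Field k] {M N Q : Type} [AddCommGroup M] [Module k M]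
  [AddCommGroup N] [Module k N] [AddCommGroup Q] [Module k Q]

/-- `substOp F g` feeds the coefficients of `g(ν)` into `F`, whose variable becomes `λ+μ`, and
then sets `ν = λ`; thus `opSubst k F G a b c = substOp (G.flip c) (F a b)`. -/
def substOp (F : M →ₗ[k] (ℕ →₀ N)) : (ℕ →₀ M) →ₗ[k] (ℕ →₀ (ℕ →₀ N)) :=
  (Finsupp.lsum k fun n => ((lamMul2 k) ^ n) ∘ₗ substAdd k) ∘ₗ cw k F

lemma opSubst_eq {A B C V W : Type} [AddCommGroup A] [Module k A] [AddCommGroup B] [Module k B]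
    [AddCommGroup C] [Module k C] [AddCommGroup V] [Module k V] [AddCommGroup W] [Module k W]
    (F : A →ₗ[k] B →ₗ[k] (ℕ →₀ C)) (G : C →ₗ[k] V →ₗ[k] (ℕ →₀ W)) (a : A) (b : B) (c : V) :
    opSubst k F G a b c = substOp (G.flip c) (F a b) :=
  rfl

lemma opCompSwap_eq {A B C V W : Type} [AddCommGroup A] [Module k A] [AddCommGroup B]
    [Module k B] [AddCommGroup C] [Module k C] [AddCommGroup V] [Module k V] [AddCommGroup W]
    [Module k W] (F : B →ₗ[k] C →ₗ[k] (ℕ →₀ W)) (G : A →ₗ[k] V →ₗ[k] (ℕ →₀ C)) (b : B) (a : A)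
    (c : V) : opCompSwap k F G b a c = swapVar k (opComp k F G b a c) :=
  rfl

lemma substOp_single (F : M →ₗ[k] (ℕ →₀ N)) (n : ℕ) (p : M) :
    substOp F (single n p) = ((lamMul2 k : (ℕ →₀ (ℕ →₀ N)) →ₗ[k] _) ^ n) (substAdd k (F p)) := by
  simp [substOp, cw_single]

lemma substOp_add (F F' : M →ₗ[k] (ℕ →₀ N)) (x : ℕ →₀ M) :
    substOp (F + F') x = substOp F x + substOp F' x := by
  rw [substOp, substOp, substOp, LinearMap.comp_apply, cw_add, map_add]
  rfl

lemma substOp_comp (F : M →ₗ[k] (ℕ →₀ N)) (g : Q →ₗ[k] M) (x : ℕ →₀ Q) :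
    substOp (F ∘ₗ g) x = substOp F (cw k g x) := by
  rw [substOp, LinearMap.comp_apply, cw_comp_apply]
  rfl

lemma cw_cw_substOp (F : M →ₗ[k] (ℕ →₀ N)) (g : N →ₗ[k] Q) (x : ℕ →₀ M) :
    cw k (cw k g) (substOp F x) = substOp (cw k g ∘ₗ F) x := by
  refine LinearMap.congr_fun (Finsupp.lhom_ext (φ := cw k (cw k g) ∘ₗ substOp F)
    (ψ := substOp (cw k g ∘ₗ F)) fun n p => ?_) x
  simp only [LinearMap.comp_apply, substOp_single]
  rw [pow_apply_of_semiconj (cw_cw_lamMul2 g)]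
  exact congrArg _ (LinearMap.congr_fun (cw_cw_substAdd g) (F p))

lemma substOp_lamMul (F : M →ₗ[k] (ℕ →₀ N)) :
    substOp F ∘ₗ lamMul k = lamMul2 k ∘ₗ substOp F := by
  apply Finsupp.lhom_ext
  intro n p
  simp only [LinearMap.comp_apply, lamMul_single, substOp_single]
  rw [pow_succ']
  rfl

lemma substOp_lamMul_comp (F : M →ₗ[k] (ℕ →₀ N)) (x : ℕ →₀ M) :
    substOp (lamMul k ∘ₗ F) x = lamMul2 k (substOp F x) + muMul2 k (substOp F x) := by
  rw [← LinearMap.add_apply]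
  refine LinearMap.congr_fun (Finsupp.lhom_ext (φ := substOp (lamMul k ∘ₗ F))
    (ψ := (lamMul2 k + muMul2 k) ∘ₗ substOp F) fun n p => ?_) x
  simp only [LinearMap.comp_apply, substOp_single]
  rw [substAdd_lamMul_apply, pow_apply_of_semiconj lamMul2_add_muMul2_comp_lamMul2]
  rfl

lemma substOp_substNeg {D : M →ₗ[k] M} (F : M →ₗ[k] (ℕ →₀ N))
    (h : ∀ p, F (D p) = -lamMul k (F p)) (x : ℕ →₀ M) :
    substOp F (substNeg k D x) = swapVar k (substOp F x) := by
  have hD : substOp F ∘ₗ cw k D = -((lamMul2 k + muMul2 k) ∘ₗ substOp F) := by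
    apply Finsupp.lhom_ext
    intro n p
    simp only [LinearMap.comp_apply, cw_single, substOp_single, LinearMap.neg_apply, h, map_neg,
      substAdd_lamMul_apply]
    rw [pow_apply_of_semiconj lamMul2_add_muMul2_comp_lamMul2]
    rfl
  have hneg : substOp F ∘ₗ (-(cw k D) - lamMul k) = muMul2 k ∘ₗ substOp F := by
    refine LinearMap.ext fun y => ?_
    have h1 := LinearMap.congr_fun hD y
    have h2 := LinearMap.congr_fun (substOp_lamMul F) y
    simp only [LinearMap.comp_apply, LinearMap.sub_apply, LinearMap.neg_apply, map_sub, map_neg,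
      LinearMap.add_apply] at h1 h2 ⊢
    rw [h1, h2]
    abel
  refine LinearMap.congr_fun (Finsupp.lhom_ext (φ := substOp F ∘ₗ substNeg k D)
    (ψ := swapVar k ∘ₗ substOp F) fun n p => ?_) x
  simp only [LinearMap.comp_apply, substNeg_single]
  rw [pow_apply_of_semiconj hneg, substOp_single F n p, pow_apply_of_semiconj swapVar_lamMul2,
    ← LinearMap.comp_apply (swapVar k), swapVar_substAdd, substOp_single, pow_zero]
  rfl

end Substitution

lemma sgn_comm (i j : ZMod 2) : sgn i j = sgn j i := by
  simp [sgn, and_comm]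

lemma sgn_smul_sgn_smul {M : Type} [AddCommGroup M] (i j : ZMod 2) (x : M) :
    sgn i j • sgn i j • x = x := by
  unfold sgn
  split <;> simp

section PoissonIdentities

variable {k : Type} [Field k] {P : Type} [AddCommGroup P] [Module k P]
  {D : P →ₗ[k] P} {par : ZMod 2 → Submodule k P} {Br Ml : P →ₗ[k] P →ₗ[k] (ℕ →₀ P)}

lemma IsLieConfSuper.jacobi_sub (h : IsLieConfSuper k D par Br) {i j : ZMod 2} {a b : P}
    (ha : a ∈ par i) (hb : b ∈ par j) (c : P) :
    opComp k Br Br a b c - sgn i j • opCompSwap k Br Br b a c = opSubst k Br Br a b c := by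
  rw [h.jacobi i j a b c ha hb]
  abel

lemma IsPoissonConfSuper.leibniz_sub (hP : IsPoissonConfSuper k D par Br Ml) {i j : ZMod 2}
    {a b : P} (ha : a ∈ par i) (hb : b ∈ par j) (c : P) :
    opComp k Br Ml a b c - sgn i j • opCompSwap k Ml Br b a c = opSubst k Br Ml a b c := by
  rw [hP.leibniz i j a b c ha hb]
  abel

/-- The Leibniz rule for `[b_μ (a_λ c)]`, with `[b_μ a]` rewritten by skew-symmetry. -/
lemma IsPoissonConfSuper.leibniz_mul_sub (hP : IsPoissonConfSuper k D par Br Ml) {i j : ZMod 2}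
    {a b : P} (ha : a ∈ par i) (hb : b ∈ par j) (c : P) :
    opComp k Ml Br a b c - sgn i j • opCompSwap k Br Ml b a c = opSubst k Br Ml a b c := by
  have hswap : swapVar k (opSubst k Br Ml b a c) = -(sgn i j • opSubst k Br Ml a b c) := by
    rw [opSubst_eq, hP.lie.skew j i b a hb ha, map_neg, map_zsmul,
      substOp_substNeg _ (fun p => hP.mul_sesqui.dleft p c), map_neg, map_zsmul,
      swapVar_swapVar, sgn_comm j i, opSubst_eq]
  have hleib : opCompSwap k Br Ml b a c
      = swapVar k (opSubst k Br Ml b a c) + sgn j i • opComp k Ml Br a b c := by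
    rw [opCompSwap_eq, hP.leibniz j i b a c hb ha, map_add, map_zsmul, opCompSwap_eq,
      swapVar_swapVar]
  rw [hleib, hswap, smul_add, smul_neg, sgn_smul_sgn_smul, sgn_comm j i, sgn_smul_sgn_smul]
  abel

end PoissonIdentities

section Submodules

variable {k : Type} [Field k] {M N : Type} [AddCommGroup M] [Module k M]
  [AddCommGroup N] [Module k N]

/-- `U[λ] ⊆ M[λ]`. -/
def coeffSubmodule (U : Submodule k M) : Submodule k (ℕ →₀ M) :=
  LinearMap.range (cw k U.subtype)

lemma mem_coeffSubmodule {U : Submodule k M} {g : ℕ →₀ M} :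
    g ∈ coeffSubmodule U ↔ ∀ n, g n ∈ U := by
  constructor
  · rintro ⟨g', rfl⟩ n
    rw [cw_apply]
    exact (g' n).2
  · intro hg
    refine ⟨Finsupp.ofSupportFinite (fun n => ⟨g n, hg n⟩)
      (g.support.finite_toSet.subset fun n hn => ?_), ?_⟩
    · simpa [Function.mem_support, Subtype.ext_iff] using hn
    · ext n
      simp [cw_apply, Finsupp.ofSupportFinite_coe]

lemma lamMul_mem_coeffSubmodule {U : Submodule k M} {g : ℕ →₀ M}
    (hg : g ∈ coeffSubmodule U) : lamMul k g ∈ coeffSubmodule U := by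
  rw [mem_coeffSubmodule] at hg ⊢
  rintro (_ | n)
  · rw [lamMul_apply_zero]; exact U.zero_mem
  · rw [lamMul_apply_succ]; exact hg n

lemma cw_mem_coeffSubmodule {U : Submodule k M} {U' : Submodule k N} {f : M →ₗ[k] N}
    (hf : ∀ x ∈ U, f x ∈ U') {g : ℕ →₀ M} (hg : g ∈ coeffSubmodule U) :
    cw k f g ∈ coeffSubmodule U' := by
  rw [mem_coeffSubmodule] at hg ⊢
  intro n
  rw [cw_apply]
  exact hf _ (hg n)

lemma mem_coeffSubmodule_prod {U : Submodule k M} {U' : Submodule k N} {g : ℕ →₀ (M × N)} :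
    g ∈ coeffSubmodule (U.prod U') ↔
      cw k (LinearMap.fst k M N) g ∈ coeffSubmodule U ∧
        cw k (LinearMap.snd k M N) g ∈ coeffSubmodule U' := by
  simp only [mem_coeffSubmodule, cw_apply, Submodule.mem_prod, forall_and, LinearMap.fst_apply,
    LinearMap.snd_apply]

lemma exists_cw_subtype_comp_eq {A : Type} [AddCommGroup A] [Module k A] {U : Submodule k M}
    {F : A →ₗ[k] (ℕ →₀ M)} (hF : ∀ x, F x ∈ coeffSubmodule U) :
    ∃ F' : A →ₗ[k] (ℕ →₀ U), cw k U.subtype ∘ₗ F' = F :=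
  ⟨_, LinearMap.codRestrictOfInjective_comp F _ (cw_injective U.injective_subtype) hF⟩

def hSpan (D : M →ₗ[k] M) (s : Set M) : Submodule k M :=
  Submodule.span k (⋃ m : ℕ, (D ^ m) '' s)

variable {D : M →ₗ[k] M} {D' : N →ₗ[k] N}

lemma subset_hSpan (s : Set M) : s ⊆ hSpan D s := fun x hx =>
  Submodule.subset_span (Set.mem_iUnion.2 ⟨0, x, hx, rfl⟩)

lemma map_mem_hSpan {s : Set M} {x : M} (hx : x ∈ hSpan D s) : D x ∈ hSpan D s := by
  induction hx using Submodule.span_induction with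
  | mem y hy =>
    obtain ⟨m, z, hz, rfl⟩ := Set.mem_iUnion.1 hy
    refine Submodule.subset_span (Set.mem_iUnion.2 ⟨m + 1, z, hz, ?_⟩)
    rw [pow_succ']
    rfl
  | zero => simp
  | add y z _ _ hy hz => rw [map_add]; exact add_mem hy hz
  | smul t y _ hy => rw [map_smul]; exact Submodule.smul_mem _ t hy

lemma pow_apply_mem {S : Submodule k M} (hS : ∀ x ∈ S, D x ∈ S) {x : M} (hx : x ∈ S) (m : ℕ) :
    (D ^ m) x ∈ S := by
  induction m with
  | zero => simpa using hx
  | succ m ih => rw [pow_succ', Module.End.mul_apply]; exact hS _ ih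

lemma hSpan_le {s : Set M} {S : Submodule k M} (hS : ∀ x ∈ S, D x ∈ S) (hs : s ⊆ S) :
    hSpan D s ≤ S :=
  Submodule.span_le.2 <| Set.iUnion_subset fun m => by
    rintro _ ⟨x, hx, rfl⟩
    exact pow_apply_mem hS (hs hx) m

lemma mem_of_hSpan_eq_top {s : Set M} (hs : hSpan D s = ⊤) {S : Submodule k M}
    (hS : ∀ x ∈ S, D x ∈ S) (hsS : s ⊆ S) (x : M) : x ∈ S :=
  hSpan_le hS hsS (hs ▸ Submodule.mem_top)

lemma hSpan_union (s t : Set M) : hSpan D (s ∪ t) = hSpan D s ⊔ hSpan D t := by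
  simp only [hSpan, Set.image_union, Set.iUnion_union_distrib, Submodule.span_union]

lemma map_hSpan {f : M →ₗ[k] N} (hf : f ∘ₗ D = D' ∘ₗ f) (s : Set M) :
    (hSpan D s).map f = hSpan D' (f '' s) := by
  simp only [hSpan, Submodule.map_span, Set.image_iUnion, Set.image_image,
    pow_apply_of_semiconj hf]

lemma hSpan_inl_union_inr (s : Set M) (t : Set N) :
    hSpan (D.prodMap D') (LinearMap.inl k M N '' s ∪ LinearMap.inr k M N '' t) =
      (hSpan D s).prod (hSpan D' t) := by
  rw [hSpan_union, ← map_hSpan (D := D) (LinearMap.ext fun x => by simp),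
    ← map_hSpan (D := D') (LinearMap.ext fun x => by simp), Submodule.map_inl, Submodule.map_inr,
    Submodule.prod_sup_prod, sup_bot_eq, bot_sup_eq]

lemma isHFinite_iff : IsHFinite k D ↔ ∃ s : Finset M, hSpan D s = ⊤ :=
  ⟨fun ⟨s, hs⟩ => ⟨s, hs _ (fun _ => map_mem_hSpan) (subset_hSpan _)⟩,
    fun ⟨s, hs⟩ => ⟨s, fun _ hW hsW => eq_top_iff.2 (hs ▸ hSpan_le hW hsW)⟩⟩

lemma isHFinite_restrict {W : Submodule k M} (hWD : ∀ x ∈ W, D x ∈ W) {s : Set M}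
    (hs : s.Finite) (hsW : hSpan D s = W) : IsHFinite k (D.restrict hWD) := by
  refine ⟨(hs.preimage Subtype.val_injective.injOn).toFinset, fun W' hW' hsW' => ?_⟩
  have hle : W ≤ W'.map W.subtype := by
    refine hsW.symm.le.trans (hSpan_le ?_ fun x hx => ?_)
    · rintro _ ⟨y, hy, rfl⟩
      exact ⟨_, hW' y hy, rfl⟩
    · exact ⟨⟨x, hsW.le (subset_hSpan s hx)⟩, hsW' (by simpa using hx), rfl⟩
  rw [eq_top_iff]
  rintro ⟨x, hx⟩ -
  obtain ⟨y, hy, hyx⟩ := hle hx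
  rwa [show y = ⟨x, hx⟩ from Subtype.ext hyx] at hy

end Submodules

section Gradings

variable {k : Type} [Field k] {M N : Type} [AddCommGroup M] [Module k M]
  [AddCommGroup N] [Module k N]

lemma forall_of_forall_homogeneous {par : ZMod 2 → Submodule k M} (hpar : par 0 ⊔ par 1 = ⊤)
    {p : M → Prop} (hadd : ∀ x y, p x → p y → p (x + y)) (hhom : ∀ i, ∀ x ∈ par i, p x)
    (x : M) : p x := by
  obtain ⟨x₀, h₀, x₁, h₁, rfl⟩ := Submodule.mem_sup.1 (hpar ▸ Submodule.mem_top : x ∈ par 0 ⊔ par 1)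
  exact hadd _ _ (hhom 0 _ h₀) (hhom 1 _ h₁)

def IsGradedSubmodule (par : ZMod 2 → Submodule k M) (W : Submodule k M) : Prop :=
  W ≤ W ⊓ par 0 ⊔ W ⊓ par 1

lemma mem_sup_of_homogeneous {par : ZMod 2 → Submodule k M} {W : Submodule k M} {i : ZMod 2}
    {x : M} (hxW : x ∈ W) (hx : x ∈ par i) : x ∈ W ⊓ par 0 ⊔ W ⊓ par 1 := by
  rcases (show ∀ z : ZMod 2, z = 0 ∨ z = 1 by decide) i with rfl | rfl
  · exact Submodule.mem_sup_left ⟨hxW, hx⟩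
  · exact Submodule.mem_sup_right ⟨hxW, hx⟩

lemma IsGradedSubmodule.prod {par : ZMod 2 → Submodule k M} {par' : ZMod 2 → Submodule k N}
    {W : Submodule k M} {W' : Submodule k N} (hW : IsGradedSubmodule par W)
    (hW' : IsGradedSubmodule par' W') :
    IsGradedSubmodule (fun i => (par i).prod (par' i)) (W.prod W') := by
  simp only [IsGradedSubmodule, Submodule.prod_inf_prod, Submodule.prod_sup_prod]
  exact Submodule.prod_mono hW hW'

lemma IsGradedHMod.prod {D : M →ₗ[k] M} {D' : N →ₗ[k] N} {par : ZMod 2 → Submodule k M}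
    {par' : ZMod 2 → Submodule k N} (h : IsGradedHMod k D par) (h' : IsGradedHMod k D' par') :
    IsGradedHMod k (D.prodMap D') fun i => (par i).prod (par' i) where
  sup_eq_top := by rw [Submodule.prod_sup_prod, h.sup_eq_top, h'.sup_eq_top, Submodule.prod_top]
  inf_eq_bot := by rw [Submodule.prod_inf_prod, h.inf_eq_bot, h'.inf_eq_bot, Submodule.prod_bot]
  map_d i x hx := ⟨h.map_d i _ hx.1, h'.map_d i _ hx.2⟩

lemma IsGradedHMod.restrict {D : M →ₗ[k] M} {par : ZMod 2 → Submodule k M}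
    (h : IsGradedHMod k D par) {W : Submodule k M} (hWD : ∀ x ∈ W, D x ∈ W)
    (hW : IsGradedSubmodule par W) :
    IsGradedHMod k (D.restrict hWD) fun i => (par i).comap W.subtype where
  sup_eq_top := by
    rw [eq_top_iff, ← Submodule.map_le_map_iff_of_injective W.injective_subtype,
      Submodule.map_sup, Submodule.map_comap_subtype, Submodule.map_comap_subtype,
      Submodule.map_subtype_top]
    exact hW
  inf_eq_bot := by
    rw [← Submodule.comap_inf, h.inf_eq_bot, Submodule.comap_bot, Submodule.ker_subtype]
  map_d i x hx := h.map_d i _ hx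

end Gradings

structure IsLieConfHom (k : Type) [Field k] {L P : Type} [AddCommGroup L] [Module k L]
    [AddCommGroup P] [Module k P] (DL : L →ₗ[k] L) (parL : ZMod 2 → Submodule k L)
    (BL : L →ₗ[k] L →ₗ[k] (ℕ →₀ L)) (DP : P →ₗ[k] P) (parP : ZMod 2 → Submodule k P)
    (BP : P →ₗ[k] P →ₗ[k] (ℕ →₀ P)) (τ : L →ₗ[k] P) : Prop where
  map_d : ∀ a, τ (DL a) = DP (τ a)
  map_par : ∀ i a, a ∈ parL i → τ a ∈ parP i
  map_bracket : ∀ a b, cw k τ (BL a b) = BP (τ a) (τ b)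

section Representations

variable {k : Type} [Field k] {L P V : Type} [AddCommGroup L] [Module k L]
  [AddCommGroup P] [Module k P] [AddCommGroup V] [Module k V]
  {DL : L →ₗ[k] L} {parL : ZMod 2 → Submodule k L} {BL : L →ₗ[k] L →ₗ[k] (ℕ →₀ L)}
  {DP : P →ₗ[k] P} {parP : ZMod 2 → Submodule k P} {BP : P →ₗ[k] P →ₗ[k] (ℕ →₀ P)}
  {DV : V →ₗ[k] V} {parV : ZMod 2 → Submodule k V}

lemma IsConfRep.comp {ρ : P →ₗ[k] V →ₗ[k] (ℕ →₀ V)} (hρ : IsConfRep k DP parP BP DV parV ρ)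
    {τ : L →ₗ[k] P} (hτ : IsLieConfHom k DL parL BL DP parP BP τ) :
    IsConfRep k DL parL BL DV parV (ρ ∘ₗ τ) where
  sesqui :=
    { dleft := fun a x => by
        simp only [LinearMap.comp_apply, hτ.map_d, hρ.sesqui.dleft]
      dright := fun a x => hρ.sesqui.dright (τ a) x }
  parity i j a x ha hx := hρ.parity i j (τ a) x (hτ.map_par i a ha) hx
  jacobi i j a b x ha hb := by
    rw [opSubst_eq, show (ρ ∘ₗ τ).flip x = ρ.flip x ∘ₗ τ from rfl, substOp_comp,
      hτ.map_bracket, ← opSubst_eq]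
    exact hρ.jacobi i j (τ a) (τ b) x (hτ.map_par i a ha) (hτ.map_par j b hb)

def restrictRep (ρ : L →ₗ[k] V →ₗ[k] (ℕ →₀ V)) (W : Submodule k V)
    (hW : ∀ a, ∀ x ∈ W, ρ a x ∈ coeffSubmodule W) : L →ₗ[k] W →ₗ[k] (ℕ →₀ W) :=
  LinearMap.codRestrict₂ (ρ.compl₂ W.subtype) (cw k W.subtype) (cw_injective W.injective_subtype)
    fun a x => hW a x x.2

variable {ρ : L →ₗ[k] V →ₗ[k] (ℕ →₀ V)} {W : Submodule k V}
  {hW : ∀ a, ∀ x ∈ W, ρ a x ∈ coeffSubmodule W}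

lemma cw_subtype_restrictRep (a : L) (x : W) :
    cw k W.subtype (restrictRep ρ W hW a x) = ρ a x :=
  LinearMap.codRestrict₂_apply _ _ _ _ a x

lemma cw_subtype_comp_restrictRep (a : L) :
    cw k W.subtype ∘ₗ restrictRep ρ W hW a = ρ a ∘ₗ W.subtype :=
  LinearMap.ext (cw_subtype_restrictRep a)

lemma IsConfRep.restrict (hρ : IsConfRep k DL parL BL DV parV ρ) (hWD : ∀ x ∈ W, DV x ∈ W) :
    IsConfRep k DL parL BL (DV.restrict hWD) (fun i => (parV i).comap W.subtype)
      (restrictRep ρ W hW) where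
  sesqui :=
    { dleft := fun a x => cw_injective W.injective_subtype <| by
        rw [cw_subtype_restrictRep, map_neg, cw_lamMul_apply, cw_subtype_restrictRep,
          hρ.sesqui.dleft]
      dright := fun a x => cw_injective W.injective_subtype <| by
        rw [cw_subtype_restrictRep, map_add, cw_lamMul_apply, ← cw_comp_apply,
          show W.subtype ∘ₗ DV.restrict hWD = DV ∘ₗ W.subtype from rfl, cw_comp_apply,
          cw_subtype_restrictRep]
        exact hρ.sesqui.dright a x }
  parity i j a x ha hx n := by
    have h := congrArg (· n) (cw_subtype_restrictRep (hW := hW) a x)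
    simp only [cw_apply, Submodule.subtype_apply] at h
    simpa [h] using hρ.parity i j a x ha hx n
  jacobi i j a b x ha hb := by
    have hcomp : ∀ c d, cw k (cw k W.subtype) (opComp k (restrictRep ρ W hW)
        (restrictRep ρ W hW) c d x) = opComp k ρ ρ c d x := fun c d => by
      rw [opComp, ← cw_comp_apply, cw_subtype_comp_restrictRep, cw_comp_apply,
        cw_subtype_restrictRep, opComp]
    have hflip : cw k W.subtype ∘ₗ (restrictRep ρ W hW).flip x = ρ.flip x :=
      LinearMap.ext fun c => cw_subtype_restrictRep (hW := hW) c x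
    refine cw_injective (cw_injective W.injective_subtype) ?_
    rw [map_sub, map_zsmul, hcomp, opCompSwap_eq, cw_cw_swapVar_apply, hcomp, ← opCompSwap_eq,
      opSubst_eq, cw_cw_substOp, hflip]
    exact hρ.jacobi i j a b x ha hb

end Representations

section TwistedRep

variable {k : Type} [Field k] {P : Type} [AddCommGroup P] [Module k P]
  {D : P →ₗ[k] P} {par : ZMod 2 → Submodule k P} {Br Ml : P →ₗ[k] P →ₗ[k] (ℕ →₀ P)}

/-- `ρ_λ(a)(x, u) = ([a_λ x], λ (a_λ x) + [a_λ u])` on `P ⊕ P`. -/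
def twistedRep (Br Ml : P →ₗ[k] P →ₗ[k] (ℕ →₀ P)) : P →ₗ[k] (P × P) →ₗ[k] (ℕ →₀ (P × P)) :=
  (Br.compl₂ (LinearMap.fst k P P)).compr₂ (cw k (LinearMap.inl k P P)) +
    ((Ml.compl₂ (LinearMap.fst k P P)).compr₂ (lamMul k) +
      Br.compl₂ (LinearMap.snd k P P)).compr₂ (cw k (LinearMap.inr k P P))

lemma cw_fst_twistedRep (a : P) (v : P × P) :
    cw k (LinearMap.fst k P P) (twistedRep Br Ml a v) = Br a v.1 := by
  ext n; simp [twistedRep, cw_apply]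

lemma cw_snd_twistedRep (a : P) (v : P × P) :
    cw k (LinearMap.snd k P P) (twistedRep Br Ml a v) = lamMul k (Ml a v.1) + Br a v.2 := by
  ext n; simp [twistedRep, cw_apply]

lemma cw_fst_comp_twistedRep (a : P) :
    cw k (LinearMap.fst k P P) ∘ₗ twistedRep Br Ml a = Br a ∘ₗ LinearMap.fst k P P :=
  LinearMap.ext (cw_fst_twistedRep a)

lemma cw_snd_comp_twistedRep (a : P) :
    cw k (LinearMap.snd k P P) ∘ₗ twistedRep Br Ml a =
      lamMul k ∘ₗ Ml a ∘ₗ LinearMap.fst k P P + Br a ∘ₗ LinearMap.snd k P P :=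
  LinearMap.ext (cw_snd_twistedRep a)

lemma cw_cw_fst_opComp_twistedRep (a b : P) (x : P × P) :
    cw k (cw k (LinearMap.fst k P P)) (opComp k (twistedRep Br Ml) (twistedRep Br Ml) a b x) =
      opComp k Br Br a b x.1 := by
  rw [opComp, ← cw_comp_apply, cw_fst_comp_twistedRep, cw_comp_apply, cw_fst_twistedRep, opComp]

lemma cw_cw_snd_opComp_twistedRep (a b : P) (x : P × P) :
    cw k (cw k (LinearMap.snd k P P)) (opComp k (twistedRep Br Ml) (twistedRep Br Ml) a b x) =
      lamMul2 k (opComp k Ml Br a b x.1) + muMul2 k (opComp k Br Ml a b x.1) +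
        opComp k Br Br a b x.2 := by
  rw [opComp, ← cw_comp_apply, cw_snd_comp_twistedRep, cw_add, cw_comp_apply, cw_comp_apply,
    cw_comp_apply, cw_fst_twistedRep, cw_snd_twistedRep, map_add, cw_lamMul_apply, add_assoc]
  rfl

lemma cw_cw_fst_opSubst_twistedRep (a b : P) (x : P × P) :
    cw k (cw k (LinearMap.fst k P P)) (opSubst k Br (twistedRep Br Ml) a b x) =
      opSubst k Br Br a b x.1 := by
  rw [opSubst_eq, cw_cw_substOp, opSubst_eq]
  exact congrArg (substOp · _) (LinearMap.ext fun c => cw_fst_twistedRep c x)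

lemma cw_cw_snd_opSubst_twistedRep (a b : P) (x : P × P) :
    cw k (cw k (LinearMap.snd k P P)) (opSubst k Br (twistedRep Br Ml) a b x) =
      lamMul2 k (opSubst k Br Ml a b x.1) + muMul2 k (opSubst k Br Ml a b x.1) +
        opSubst k Br Br a b x.2 := by
  have hflip : cw k (LinearMap.snd k P P) ∘ₗ (twistedRep Br Ml).flip x =
      lamMul k ∘ₗ Ml.flip x.1 + Br.flip x.2 :=
    LinearMap.ext fun c => cw_snd_twistedRep c x
  rw [opSubst_eq, cw_cw_substOp, hflip, substOp_add, substOp_lamMul_comp]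
  rfl

lemma twistedRep_apply_mk_zero_ne_zero {a b : P} (h : Ml a b ≠ 0) :
    twistedRep Br Ml a (b, 0) ≠ 0 := fun h0 => h <| lamMul_injective (k := k) <| by
  simpa using (cw_snd_twistedRep (Br := Br) (Ml := Ml) a (b, 0)).symm.trans
    (congrArg (cw k (LinearMap.snd k P P)) h0)

lemma isSesqui_twistedRep (hP : IsPoissonConfSuper k D par Br Ml) :
    IsSesqui k D (D.prodMap D) (D.prodMap D) (twistedRep Br Ml) := by
  have hfst : LinearMap.fst k P P ∘ₗ D.prodMap D = D ∘ₗ LinearMap.fst k P P := rfl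
  have hsnd : LinearMap.snd k P P ∘ₗ D.prodMap D = D ∘ₗ LinearMap.snd k P P := rfl
  refine ⟨fun a v => polynomial_prod_ext (k := k) ?_ ?_,
    fun a v => polynomial_prod_ext (k := k) ?_ ?_⟩
  · rw [cw_fst_twistedRep, map_neg, cw_lamMul_apply, cw_fst_twistedRep, hP.lie.sesqui.dleft]
  · rw [cw_snd_twistedRep, map_neg, cw_lamMul_apply, cw_snd_twistedRep, hP.mul_sesqui.dleft,
      hP.lie.sesqui.dleft, map_neg, map_add, neg_add]
  · rw [map_add, cw_lamMul_apply, ← cw_comp_apply, hfst, cw_comp_apply, cw_fst_twistedRep,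
      cw_fst_twistedRep]
    exact hP.lie.sesqui.dright a v.1
  · rw [map_add, cw_lamMul_apply, ← cw_comp_apply, hsnd, cw_comp_apply, cw_snd_twistedRep,
      cw_snd_twistedRep, LinearMap.prodMap_apply, hP.mul_sesqui.dright, hP.lie.sesqui.dright,
      map_add, map_add, map_add, cw_lamMul_apply]
    abel

theorem isConfRep_twistedRep (hP : IsPoissonConfSuper k D par Br Ml) :
    IsConfRep k D par Br (D.prodMap D) (fun i => (par i).prod (par i)) (twistedRep Br Ml) where
  sesqui := isSesqui_twistedRep hP
  parity i j a x ha hx n := by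
    have h₁ := congrArg (· n) (cw_fst_twistedRep (Br := Br) (Ml := Ml) a x)
    have h₂ := congrArg (· n) (cw_snd_twistedRep (Br := Br) (Ml := Ml) a x)
    simp only [cw_apply, LinearMap.fst_apply, LinearMap.snd_apply, Finsupp.add_apply] at h₁ h₂
    refine Submodule.mem_prod.2
      ⟨h₁ ▸ hP.lie.parity i j a x.1 ha hx.1 n, h₂ ▸ add_mem ?_ (hP.lie.parity i j a x.2 ha hx.2 n)⟩
    rcases n with _ | n
    · rw [lamMul_apply_zero]; exact zero_mem _
    · rw [lamMul_apply_succ]; exact hP.mul_parity i j a x.1 ha hx.1 n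
  jacobi i j a b x ha hb := by
    refine polynomial₂_prod_ext (k := k) ?_ ?_
    · rw [map_sub, map_zsmul, opCompSwap_eq, cw_cw_swapVar_apply, cw_cw_fst_opComp_twistedRep,
        cw_cw_fst_opComp_twistedRep, cw_cw_fst_opSubst_twistedRep, ← opCompSwap_eq]
      exact hP.lie.jacobi_sub ha hb x.1
    · have h₁ : lamMul2 k (opComp k Ml Br a b x.1) - sgn i j • lamMul2 k
          (opCompSwap k Br Ml b a x.1) = lamMul2 k (opSubst k Br Ml a b x.1) := by
        rw [← map_zsmul, ← map_sub, hP.leibniz_mul_sub ha hb]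
      have h₂ : muMul2 k (opComp k Br Ml a b x.1) - sgn i j • muMul2 k
          (opCompSwap k Ml Br b a x.1) = muMul2 k (opSubst k Br Ml a b x.1) := by
        rw [← map_zsmul, ← map_sub, hP.leibniz_sub ha hb]
      rw [map_sub, map_zsmul, opCompSwap_eq, cw_cw_swapVar_apply, cw_cw_snd_opComp_twistedRep,
        cw_cw_snd_opComp_twistedRep, cw_cw_snd_opSubst_twistedRep, map_add, map_add,
        swapVar_lamMul2_apply, swapVar_muMul2_apply, ← opCompSwap_eq, ← opCompSwap_eq,
        ← opCompSwap_eq, ← h₁, ← h₂, ← hP.lie.jacobi_sub ha hb]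
      simp only [smul_add]
      abel

end TwistedRep

section Embedding

variable {k : Type} [Field k] {L P : Type} [AddCommGroup L] [Module k L]
  [AddCommGroup P] [Module k P]
  {DL : L →ₗ[k] L} {parL : ZMod 2 → Submodule k L} {BL : L →ₗ[k] L →ₗ[k] (ℕ →₀ L)}
  {DP : P →ₗ[k] P} {parP : ZMod 2 → Submodule k P} {BP MP : P →ₗ[k] P →ₗ[k] (ℕ →₀ P)}
  {τ : L →ₗ[k] P}

lemma IsLieConfHom.isGradedSubmodule_range (hτ : IsLieConfHom k DL parL BL DP parP BP τ)
    (hL : parL 0 ⊔ parL 1 = ⊤) : IsGradedSubmodule parP (LinearMap.range τ) := by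
  rintro _ ⟨x, rfl⟩
  refine forall_of_forall_homogeneous hL
    (p := fun x => τ x ∈ LinearMap.range τ ⊓ parP 0 ⊔ LinearMap.range τ ⊓ parP 1)
    (fun x y hx hy => ?_) (fun i x hx => ?_) x
  · simpa only [map_add] using add_mem hx hy
  · exact mem_sup_of_homogeneous (LinearMap.mem_range_self τ x) (hτ.map_par i x hx)

def productSpan (DP : P →ₗ[k] P) (MP : P →ₗ[k] P →ₗ[k] (ℕ →₀ P)) (τ : L →ₗ[k] P) :
    Submodule k P :=
  hSpan DP (⋃ a, ⋃ b, Set.range (MP (τ a) (τ b)))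

lemma coeff_mem_productSpan (a b : L) (n : ℕ) : MP (τ a) (τ b) n ∈ productSpan DP MP τ :=
  subset_hSpan _ (Set.mem_iUnion₂.2 ⟨a, b, n, rfl⟩)

lemma mul_mem_coeffSubmodule_productSpan (a b : L) :
    MP (τ a) (τ b) ∈ coeffSubmodule (productSpan DP MP τ) :=
  mem_coeffSubmodule.2 (coeff_mem_productSpan a b)

lemma map_mem_productSpan {p : P} (hp : p ∈ productSpan DP MP τ) : DP p ∈ productSpan DP MP τ :=
  map_mem_hSpan hp

lemma opComp_bracket_mul_mem_range (hP : IsPoissonConfSuper k DP parP BP MP)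
    (hτ : IsLieConfHom k DL parL BL DP parP BP τ) (hL : parL 0 ⊔ parL 1 = ⊤) (c a b : L) :
    opComp k BP MP (τ c) (τ a) (τ b) ∈
      LinearMap.range (cw k (cw k (productSpan DP MP τ).subtype)) := by
  obtain ⟨F₁, hF₁⟩ := exists_cw_subtype_comp_eq (F := MP.flip (τ b) ∘ₗ τ)
    fun a => mul_mem_coeffSubmodule_productSpan a b
  set R := LinearMap.range (cw k (cw k (productSpan DP MP τ).subtype))
  refine forall_of_forall_homogeneous hL (p := fun c => ∀ a, opComp k BP MP (τ c) (τ a) (τ b) ∈ R)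
    (fun c c' hc hc' a => ?_) (fun i c hc => ?_) c a
  · simpa only [opComp, map_add, LinearMap.add_apply, cw_add] using add_mem (hc a) (hc' a)
  refine forall_of_forall_homogeneous hL (p := fun a => opComp k BP MP (τ c) (τ a) (τ b) ∈ R)
    (fun a a' ha ha' => ?_) (fun j a ha => ?_)
  · simpa only [opComp, map_add, LinearMap.add_apply, cw_add] using add_mem ha ha'
  obtain ⟨F₂, hF₂⟩ := exists_cw_subtype_comp_eq (F := MP (τ a) ∘ₗ τ)
    fun b => mul_mem_coeffSubmodule_productSpan a b
  rw [hP.leibniz i j _ _ _ (hτ.map_par i c hc) (hτ.map_par j a ha), opSubst_eq,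
    ← hτ.map_bracket, ← substOp_comp, ← hF₁, ← cw_cw_substOp, opCompSwap_eq, opComp,
    ← hτ.map_bracket, ← cw_comp_apply, ← hF₂, cw_comp_apply, ← cw_cw_swapVar_apply]
  exact add_mem (LinearMap.mem_range_self _ _) (zsmul_mem (LinearMap.mem_range_self _ _) _)

lemma bracket_mem_coeffSubmodule_productSpan (hP : IsPoissonConfSuper k DP parP BP MP)
    (hτ : IsLieConfHom k DL parL BL DP parP BP τ) (hL : parL 0 ⊔ parL 1 = ⊤) (c : L) {p : P}
    (hp : p ∈ productSpan DP MP τ) : BP (τ c) p ∈ coeffSubmodule (productSpan DP MP τ) := by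
  refine hSpan_le (S := (coeffSubmodule (productSpan DP MP τ)).comap (BP (τ c)))
    (fun q hq => ?_) ?_ hp
  · rw [Submodule.mem_comap, hP.lie.sesqui.dright]
    exact add_mem (cw_mem_coeffSubmodule (fun _ => map_mem_productSpan) hq)
      (lamMul_mem_coeffSubmodule hq)
  · simp only [Set.iUnion_subset_iff]
    rintro a b _ ⟨m, rfl⟩
    obtain ⟨g, hg⟩ := opComp_bracket_mul_mem_range hP hτ hL c a b
    refine mem_coeffSubmodule.2 fun n => ?_
    have hgmn := congrArg (· m n) hg
    simp only [cw_apply, opComp, Submodule.subtype_apply] at hgmn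
    exact hgmn ▸ (g m n).2

lemma isGradedSubmodule_productSpan (hP : IsPoissonConfSuper k DP parP BP MP)
    (hτ : IsLieConfHom k DL parL BL DP parP BP τ) (hL : parL 0 ⊔ parL 1 = ⊤) :
    IsGradedSubmodule parP (productSpan DP MP τ) := by
  have hinv : ∀ i, productSpan DP MP τ ⊓ parP i ∈ Module.End.invtSubmodule DP := fun i =>
    Sublattice.inf_mem (fun _ => map_mem_productSpan) (fun x => hP.lie.graded.map_d i x)
  refine hSpan_le (fun x hx => Sublattice.sup_mem (hinv 0) (hinv 1) hx) ?_
  simp only [Set.iUnion_subset_iff]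
  rintro a b _ ⟨n, rfl⟩
  set T := productSpan DP MP τ ⊓ parP 0 ⊔ productSpan DP MP τ ⊓ parP 1
  refine forall_of_forall_homogeneous hL (p := fun a => ∀ b, MP (τ a) (τ b) n ∈ T)
    (fun a a' ha ha' b => ?_) (fun i a ha => ?_) a b
  · simpa only [map_add, LinearMap.add_apply, Finsupp.add_apply] using add_mem (ha b) (ha' b)
  refine forall_of_forall_homogeneous hL (p := fun b => MP (τ a) (τ b) n ∈ T)
    (fun b b' hb hb' => ?_) (fun j b hb => ?_)
  · simpa only [map_add, Finsupp.add_apply] using add_mem hb hb'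
  exact mem_sup_of_homogeneous (coeff_mem_productSpan a b n)
    (hP.mul_parity i j _ _ (hτ.map_par i a ha) (hτ.map_par j b hb) n)

lemma productSpan_eq_hSpan (hP : IsPoissonConfSuper k DP parP BP MP)
    (hτ : IsLieConfHom k DL parL BL DP parP BP τ) {s : Set L} (hs : hSpan DL s = ⊤) :
    productSpan DP MP τ = hSpan DP (⋃ a ∈ s, ⋃ b ∈ s, Set.range (MP (τ a) (τ b))) := by
  set T := hSpan DP (⋃ a ∈ s, ⋃ b ∈ s, Set.range (MP (τ a) (τ b)))
  have hgen : ∀ a ∈ s, ∀ b ∈ s, MP (τ a) (τ b) ∈ coeffSubmodule T := fun a ha b hb =>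
    mem_coeffSubmodule.2 fun n => subset_hSpan _ (by simp only [Set.mem_iUnion]; exact
      ⟨a, ha, b, hb, n, rfl⟩)
  have hleft : ∀ b ∈ s, ∀ a, MP (τ a) (τ b) ∈ coeffSubmodule T := fun b hb =>
    mem_of_hSpan_eq_top hs (S := (coeffSubmodule T).comap (MP.flip (τ b) ∘ₗ τ))
      (fun a ha => by
        simpa [hτ.map_d, hP.mul_sesqui.dleft] using lamMul_mem_coeffSubmodule ha)
      (fun a ha => hgen a ha b hb)
  have hall : ∀ b a, MP (τ a) (τ b) ∈ coeffSubmodule T := fun b =>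
    Submodule.mem_iInf _ |>.1 <|
      mem_of_hSpan_eq_top hs (S := ⨅ a, (coeffSubmodule T).comap (MP (τ a) ∘ₗ τ))
        (fun b hb => Submodule.mem_iInf _ |>.2 fun a => by
          have hb := Submodule.mem_iInf _ |>.1 hb a
          simp only [Submodule.mem_comap, LinearMap.comp_apply] at hb ⊢
          rw [hτ.map_d, hP.mul_sesqui.dright]
          exact add_mem (cw_mem_coeffSubmodule (fun _ => map_mem_hSpan) hb)
            (lamMul_mem_coeffSubmodule hb))
        (fun b hb => Submodule.mem_iInf _ |>.2 fun a => hleft b hb a) b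
  refine le_antisymm (hSpan_le (fun _ => map_mem_hSpan) ?_)
    (hSpan_le (fun _ => map_mem_hSpan) fun p hp => subset_hSpan _ ?_)
  · simp only [Set.iUnion_subset_iff]
    rintro a b _ ⟨n, rfl⟩
    exact mem_coeffSubmodule.1 (hall b a) n
  · simp only [Set.mem_iUnion] at hp ⊢
    obtain ⟨a, -, b, -, hp⟩ := hp
    exact ⟨a, b, hp⟩

lemma twistedRep_mem_coeffSubmodule (hP : IsPoissonConfSuper k DP parP BP MP)
    (hτ : IsLieConfHom k DL parL BL DP parP BP τ) (hL : parL 0 ⊔ parL 1 = ⊤) (a : L)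
    {x : P × P} (hx : x ∈ (LinearMap.range τ).prod (productSpan DP MP τ)) :
    twistedRep BP MP (τ a) x ∈ coeffSubmodule ((LinearMap.range τ).prod (productSpan DP MP τ)) := by
  obtain ⟨⟨y, hy⟩, hu⟩ := Submodule.mem_prod.1 hx
  rw [mem_coeffSubmodule_prod, cw_fst_twistedRep, cw_snd_twistedRep, ← hy, ← hτ.map_bracket]
  refine ⟨mem_coeffSubmodule.2 fun n => ?_, add_mem
    (lamMul_mem_coeffSubmodule (mul_mem_coeffSubmodule_productSpan a y))
    (bracket_mem_coeffSubmodule_productSpan hP hτ hL a hu)⟩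
  rw [cw_apply]
  exact LinearMap.mem_range_self τ _

lemma prodMap_mem_range_prod_productSpan (hτ : IsLieConfHom k DL parL BL DP parP BP τ)
    {x : P × P} (hx : x ∈ (LinearMap.range τ).prod (productSpan DP MP τ)) :
    DP.prodMap DP x ∈ (LinearMap.range τ).prod (productSpan DP MP τ) := by
  obtain ⟨⟨y, hy⟩, hu⟩ := Submodule.mem_prod.1 hx
  exact Submodule.mem_prod.2 ⟨⟨DL y, by rw [hτ.map_d, hy]; rfl⟩, map_mem_productSpan hu⟩

lemma exists_finite_hSpan_eq_range_prod_productSpan (hP : IsPoissonConfSuper k DP parP BP MP)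
    (hτ : IsLieConfHom k DL parL BL DP parP BP τ) {s : Finset L} (hs : hSpan DL s = ⊤) :
    ∃ t : Set (P × P), t.Finite ∧
      hSpan (DP.prodMap DP) t = (LinearMap.range τ).prod (productSpan DP MP τ) := by
  refine ⟨LinearMap.inl k P P '' (τ '' s) ∪
    LinearMap.inr k P P '' ⋃ a ∈ (s : Set L), ⋃ b ∈ (s : Set L), Set.range (MP (τ a) (τ b)),
    ((s.finite_toSet.image _).image _).union ((s.finite_toSet.biUnion fun a _ =>
      s.finite_toSet.biUnion fun b _ => (MP (τ a) (τ b)).finite_range).image _), ?_⟩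
  rw [hSpan_inl_union_inr, ← map_hSpan (LinearMap.ext hτ.map_d), hs, Submodule.map_top,
    ← productSpan_eq_hSpan hP hτ hs]

end Embedding

theorem ffr_of_embedding_into_poisson
    (L P : Type) [AddCommGroup L] [Module k L] [AddCommGroup P] [Module k P]
    (DL : L →ₗ[k] L) (parL : ZMod 2 → Submodule k L) (BL : L →ₗ[k] L →ₗ[k] (ℕ →₀ L))
    (hL : IsLieConfSuper k DL parL BL) (hLfin : IsHFinite k DL)
    (DP : P →ₗ[k] P) (parP : ZMod 2 → Submodule k P)
    (BP MP : P →ₗ[k] P →ₗ[k] (ℕ →₀ P))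
    (hP : IsPoissonConfSuper k DP parP BP MP)
    (τ : L →ₗ[k] P)
    (hτD : ∀ a, τ (DL a) = DP (τ a))
    (hτpar : ∀ i a, a ∈ parL i → τ a ∈ parP i)
    (hτbr : ∀ a b, cw k τ (BL a b) = BP (τ a) (τ b))
    (hnondeg : ∀ a : L, a ≠ 0 → ∃ b : L, MP (τ a) (τ b) ≠ 0) :
    HasFFR k DL parL BL := by
  obtain ⟨sL, hsL⟩ := isHFinite_iff.1 hLfin
  have hτ : IsLieConfHom k DL parL BL DP parP BP τ := ⟨hτD, hτpar, hτbr⟩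
  have hLpar := hL.graded.sup_eq_top
  set W := (LinearMap.range τ).prod (productSpan DP MP τ)
  have hWD : ∀ x ∈ W, DP.prodMap DP x ∈ W := fun _ => prodMap_mem_range_prod_productSpan hτ
  have hWρ : ∀ a, ∀ x ∈ W, (twistedRep BP MP ∘ₗ τ) a x ∈ coeffSubmodule W :=
    fun a _ => twistedRep_mem_coeffSubmodule hP hτ hLpar a
  obtain ⟨t, ht, hWgen⟩ := exists_finite_hSpan_eq_range_prod_productSpan hP hτ hsL
  refine ⟨W, inferInstance, inferInstance, _, _, restrictRep _ W hWρ,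
    (hP.lie.graded.prod hP.lie.graded).restrict hWD
      ((hτ.isGradedSubmodule_range hLpar).prod (isGradedSubmodule_productSpan hP hτ hLpar)),
    ((isConfRep_twistedRep hP).comp hτ).restrict hWD, isHFinite_restrict hWD ht hWgen,
    fun a ha h0 => ?_⟩
  obtain ⟨b, hb⟩ := hnondeg a ha
  refine twistedRep_apply_mk_zero_ne_zero (Br := BP) hb ?_
  have h := cw_subtype_restrictRep (hW := hWρ) a ⟨(τ b, 0), ⟨b, rfl⟩, zero_mem _⟩
  rwa [h0, LinearMap.zero_apply, map_zero, eq_comm] at h
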